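/- Let H be a real normed vector space, λ ≥ 0 and a > 2. The SCAD functional thresholding rule satisfies condition (i) with constant c = 2: for all Z, Y ∈ H with ‖Z − Y‖ ≤ λ, one has ‖s^SC_λ(Z)‖ ≤ 2‖Y‖. -/

import Mathlib

/-- SCAD functional thresholding rule: soft thresholding for `‖Z‖ ≤ 2λ`,
`(((a−1) − aλ/‖Z‖)/(a−2)) • Z` for `2λ < ‖Z‖ ≤ aλ`, and `Z` for `‖Z‖ > aλ`. -/
noncomputable def scadThresh {H : Type*} [NormedAddCommGroup H] [NormedSpace ℝ H]
    (lam a : ℝ) (Z : H) : H :=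
  if ‖Z‖ ≤ 2 * lam then (max (1 - lam / ‖Z‖) 0) • Z
  else if ‖Z‖ ≤ a * lam then (((a - 1) - a * lam / ‖Z‖) / (a - 2)) • Z
  else Z

/-!
Every branch of the rule obeys `‖s_λ(Z)‖ ≤ 2 (‖Z‖ - λ)₊`: soft thresholding has norm exactly
`(‖Z‖ - λ)₊`, and once `‖Z‖ > 2λ` the rule only shrinks `Z`, while there `‖Z‖ ≤ 2 (‖Z‖ - λ)`.
The triangle inequality turns `‖Z - Y‖ ≤ λ` into `(‖Z‖ - λ)₊ ≤ ‖Y‖`.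
-/

section

variable {H : Type*} [NormedAddCommGroup H] [NormedSpace ℝ H]

theorem norm_max_one_sub_div_smul_le (lam : ℝ) (Z : H) :
    ‖max (1 - lam / ‖Z‖) 0 • Z‖ ≤ max (‖Z‖ - lam) 0 := by
  rcases eq_or_ne Z 0 with rfl | hZ
  · simp
  rw [norm_smul, Real.norm_of_nonneg (le_max_right _ _), max_mul_of_nonneg _ _ (norm_nonneg Z),
    sub_mul, div_mul_cancel₀ _ (norm_ne_zero_iff.2 hZ), one_mul, zero_mul]

theorem scad_coeff_mem_Icc {lam a z : ℝ} (hlam : 0 ≤ lam) (hlow : 2 * lam < z)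
    (hhigh : z ≤ a * lam) : ((a - 1) - a * lam / z) / (a - 2) ∈ Set.Icc (0 : ℝ) 1 := by
  have hz : 0 < z := by linarith
  have hlam_pos : 0 < lam := by
    by_contra! h
    obtain rfl : lam = 0 := le_antisymm h hlam
    linarith
  have ha : 2 < a := by nlinarith
  have hratio : a * lam / z ∈ Set.Icc 1 (a / 2) := by
    constructor
    · rwa [le_div_iff₀ hz, one_mul]
    · rw [div_le_div_iff₀ hz two_pos]
      nlinarith
  obtain ⟨hratio_ge, hratio_le⟩ := hratio
  constructor
  · exact div_nonneg (by linarith) (by linarith)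
  · rw [div_le_one (by linarith)]
    linarith

theorem norm_scadThresh_le {lam : ℝ} (hlam : 0 ≤ lam) (a : ℝ) (Z : H) :
    ‖scadThresh lam a Z‖ ≤ 2 * max (‖Z‖ - lam) 0 := by
  have hlarge : 2 * lam < ‖Z‖ → ‖Z‖ ≤ 2 * max (‖Z‖ - lam) 0 := fun h => by
    linarith [le_max_left (‖Z‖ - lam) 0]
  unfold scadThresh
  split_ifs with hsmall hmid
  · linarith [norm_max_one_sub_div_smul_le lam Z, le_max_right (‖Z‖ - lam) 0]
  · obtain ⟨hcoeff_nonneg, hcoeff_le_one⟩ := scad_coeff_mem_Icc hlam (not_le.1 hsmall) hmid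
    rw [norm_smul, Real.norm_of_nonneg hcoeff_nonneg]
    exact (mul_le_of_le_one_left (norm_nonneg Z) hcoeff_le_one).trans (hlarge (not_le.1 hsmall))
  · exact hlarge (not_le.1 hsmall)

end

theorem scadThresh_condition_i {H : Type*} [NormedAddCommGroup H] [NormedSpace ℝ H]
    (lam a : ℝ) :
    ∀ Z Y : H, ‖Z - Y‖ ≤ lam → ‖scadThresh lam a Z‖ ≤ 2 * ‖Y‖ := by
  intro Z Y hZY
  have hY : max (‖Z‖ - lam) 0 ≤ ‖Y‖ :=
    max_le (by linarith [norm_sub_norm_le Z Y]) (norm_nonneg Y)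
  calc ‖scadThresh lam a Z‖ ≤ 2 * max (‖Z‖ - lam) 0 :=
        norm_scadThresh_le ((norm_nonneg _).trans hZY) a Z
    _ ≤ 2 * ‖Y‖ := by gcongr
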